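/- Let ω : ℤ → {a,b} satisfy (Fibonacci-type substitutive periodicity): ω is the periodization of l_k, where l₀=[a], l₁=[b], l_{j+1}=l_j++l_{j-1}. Then the least period of ω divides φ_k (the k-th Fibonacci number with φ₀=φ₁=1), and for k ≥ 2 the least period equals φ_k. -/
import Mathlib


inductive Letter | a | b
deriving DecidableEq

def l : ℕ → List Letter
  | 0 => [Letter.a]
  | 1 => [Letter.b]
  | (k + 2) => l (k + 1) ++ l k

def phi : ℕ → ℕ
  | 0 => 1
  | 1 => 1
  | (k + 2) => phi (k + 1) + phi k

def IsLeastPeriod {A : Type*} (ω : ℤ → A) (n : ℕ) : Prop :=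
  0 < n ∧ (∀ i, ω (i + n) = ω i) ∧
    ∀ m : ℕ, 0 < m → (∀ i, ω (i + m) = ω i) → n ≤ m

/-- The periodization of a finite word `w`: `ω i = w (i mod |w|)`. -/
def periodization (w : List Letter) (i : ℤ) : Letter :=
  w.getD (i % (w.length : ℤ)).toNat Letter.a

theorem l_length : ∀ k, (l k).length = phi k
  | 0 => rfl
  | 1 => rfl
  | (k+2) => by
      show (l (k+1) ++ l k).length = phi (k+1) + phi k
      rw [List.length_append, l_length (k+1), l_length k]

theorem phi_pos : ∀ k, 0 < phi k
  | 0 => one_pos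
  | 1 => one_pos
  | (k+2) => by
      have := phi_pos (k+1); show 0 < phi (k+1) + phi k; omega

theorem phi_fib : ∀ k, phi k = Nat.fib (k+1)
  | 0 => rfl
  | 1 => rfl
  | (k+2) => by
      have h : Nat.fib (k+3) = Nat.fib (k+1) + Nat.fib (k+2) := by
        rw [show k+3 = (k+1)+2 from rfl, Nat.fib_add_two]
      show phi (k+1) + phi k = Nat.fib (k+3)
      rw [phi_fib (k+1), phi_fib k, h, Nat.add_comm]

theorem count_a : ∀ k, (l (k+2)).count Letter.a = phi k
  | 0 => by decide
  | 1 => by decide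
  | (k+2) => by
      show (l (k+3) ++ l (k+2)).count Letter.a = phi (k+1) + phi k
      rw [List.count_append, count_a (k+1), count_a k]

theorem count_b : ∀ k, (l (k+2)).count Letter.b = phi (k+1)
  | 0 => by decide
  | 1 => by decide
  | (k+2) => by
      show (l (k+3) ++ l (k+2)).count Letter.b = phi (k+2) + phi (k+1)
      rw [List.count_append, count_b (k+1), count_b k]

theorem count_flatten_replicate (d : ℕ) (u : List Letter) (x : Letter) :
    ((List.replicate d u).flatten.count x) = d * u.count x := by
  induction d with
  | zero => simp
  | succ d ih =>
      rw [List.replicate_succ, List.flatten_cons, List.count_append, ih]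
      ring

theorem pow_of_internal_period : ∀ (d p : ℕ) (w : List Letter), 0 < p →
    w.length = d * p →
    (∀ i : ℕ, (h : i + p < w.length) → w[i + p] = w[i]'(by omega)) →
    w = (List.replicate d (w.take p)).flatten := by
  intro d
  induction d with
  | zero =>
      intro p w hp hl _
      simp at hl ⊢
      exact hl
  | succ d ih =>
      intro p w hp hl hP
      have hlen : w.length = (d + 1) * p := hl
      have hdroplen : (w.drop p).length = d * p := by
        rw [List.length_drop, hlen]; ring_nf; omega
      have hdrop : w.drop p = (List.replicate d ((w.drop p).take p)).flatten := by
        apply ih p (w.drop p) hp hdroplen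
        intro i h
        have h1 : p + (i + p) < w.length := by
          rw [List.length_drop] at h; omega
        have h2 : p + i < w.length := by omega
        rw [List.getElem_drop, List.getElem_drop]
        have : (p + i) + p < w.length := by omega
        have hPP := hP (p + i) this
        convert hPP using 2 <;> omega
      have htake : (List.replicate d ((w.drop p).take p)) = List.replicate d (w.take p) := by
        rcases Nat.eq_zero_or_pos d with hd | hd
        · subst hd; rfl
        · congr 1
          apply List.ext_getElem
          · have e1 : p ≤ d * p := Nat.le_mul_of_pos_left p hd
            have e2 : p ≤ (d + 1) * p := by nlinarith
            rw [List.length_take, List.length_take, hdroplen, hlen]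
            omega
          · intro i h1 h2
            have hip : i < p := by
              rw [List.length_take] at h1; omega
            have h3 : p + i < w.length := by
              rw [hlen]; nlinarith
            rw [List.getElem_take, List.getElem_take, List.getElem_drop]
            have h4 : i + p < w.length := by omega
            have hPP := hP i h4
            convert hPP using 2 <;> omega
      rw [htake] at hdrop
      conv_lhs => rw [← List.take_append_drop p w, hdrop]
      rw [List.replicate_succ, List.flatten_cons]

theorem stmt19 (k : ℕ) (ω : ℤ → Letter) (hω : ω = periodization (l k)) :
    (∃ p : ℕ, IsLeastPeriod ω p ∧ p ∣ phi k) ∧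
    (2 ≤ k → IsLeastPeriod ω (phi k)) := by
  subst hω
  set w := l k with hw
  set m := phi k with hmdef
  have hm : w.length = m := l_length k
  have hmpos : 0 < m := phi_pos k
  -- the set of integer periods is a subgroup of ℤ
  let H : AddSubgroup ℤ :=
    { carrier := {z | ∀ i, periodization w (i + z) = periodization w i}
      zero_mem' := by intro i; simp
      add_mem' := by
        intro x y hx hy i
        have : i + (x + y) = (i + x) + y := by ring
        rw [this, hy (i + x), hx i]
      neg_mem' := by
        intro x hx i
        have h1 := hx (i - x)
        simp only [sub_add_cancel] at h1
        rw [show i + -x = i - x from by ring, ← h1] }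
  have hmemH : ∀ z, z ∈ H ↔ ∀ i, periodization w (i + z) = periodization w i :=
    fun z => Iff.rfl
  have hmH : (m : ℤ) ∈ H := by
    intro i
    unfold periodization
    rw [← hm]
    have : (i + (w.length : ℤ)) % (w.length : ℤ) = i % (w.length : ℤ) := by
      simpa using Int.add_mul_emod_self_left (a := i) (b := (w.length : ℤ)) (c := 1)
    rw [this]
  obtain ⟨g, hg⟩ := Int.subgroup_cyclic H
  have hdvd : ∀ z, z ∈ H ↔ g ∣ z := by
    intro z
    rw [hg, AddSubgroup.mem_closure_singleton]
    constructor
    · rintro ⟨n, rfl⟩; exact ⟨n, by rw [smul_eq_mul, mul_comm]⟩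
    · rintro ⟨c, rfl⟩; exact ⟨c, by rw [smul_eq_mul, mul_comm]⟩
  have hg0 : g ≠ 0 := by
    intro h0
    have := (hdvd _).mp hmH
    rw [h0] at this
    have : (m : ℤ) = 0 := zero_dvd_iff.mp this
    omega
  set p := g.natAbs with hpdef
  have hppos : 0 < p := Int.natAbs_pos.mpr hg0
  have hpH : (p : ℤ) ∈ H := (hdvd _).mpr (Int.dvd_natAbs.mpr dvd_rfl)
  have hpm : p ∣ m := by
    have h1 : g ∣ (m : ℤ) := (hdvd _).mp hmH
    have h2 : (p : ℤ) ∣ (m : ℤ) := Int.natAbs_dvd.mpr h1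
    exact Int.ofNat_dvd.mp h2
  have hleast : IsLeastPeriod (periodization w) p := by
    refine ⟨hppos, hpH, ?_⟩
    intro n hn hper
    have : (n : ℤ) ∈ H := hper
    have h1 : (p : ℤ) ∣ (n : ℤ) := Int.natAbs_dvd.mpr ((hdvd _).mp this)
    exact Nat.le_of_dvd hn (Int.ofNat_dvd.mp h1)
  constructor
  · exact ⟨p, hleast, hpm⟩
  · intro hk
    -- it suffices to show p = m
    suffices hpeq : p = m by rwa [hpeq] at hleast
    -- internal period of the word w
    have hinternal : ∀ i : ℕ, (h : i + p < w.length) → w[i + p] = w[i]'(by omega) := by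
      intro i h
      have hper := hpH (i : ℤ)
      unfold periodization at hper
      have hip : ((i : ℤ) + p) % w.length = ((i : ℤ) + p) :=
        Int.emod_eq_of_lt (by positivity) (by exact_mod_cast h)
      have hi : (i : ℤ) % w.length = (i : ℤ) :=
        Int.emod_eq_of_lt (by positivity) (by exact_mod_cast (by omega : i < w.length))
      rw [hip, hi] at hper
      have hcast : ((i : ℤ) + p).toNat = i + p := by omega
      rw [hcast, Int.toNat_natCast] at hper
      rw [List.getD_eq_getElem w Letter.a h, List.getD_eq_getElem w Letter.a (by omega)] at hper
      exact hper
    obtain ⟨d, hd⟩ := hpm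
    have hld : w.length = d * p := by rw [hm, hd]; ring
    have hpow := pow_of_internal_period d p w hppos hld hinternal
    have hcount : ∀ x, w.count x = d * (w.take p).count x := by
      intro x
      conv_lhs => rw [hpow]
      exact count_flatten_replicate d (w.take p) x
    obtain ⟨j, rfl⟩ : ∃ j, k = j + 2 := ⟨k - 2, by omega⟩
    have hca : w.count Letter.a = phi j := count_a j
    have hcb : w.count Letter.b = phi (j + 1) := count_b j
    have hda : d ∣ phi j := ⟨_, by rw [← hca, hcount]⟩
    have hdb : d ∣ phi (j + 1) := ⟨_, by rw [← hcb, hcount]⟩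
    have hcop : Nat.Coprime (phi j) (phi (j + 1)) := by
      rw [phi_fib j, phi_fib (j + 1)]
      exact Nat.fib_coprime_fib_succ (j + 1)
    have hd1 : d = 1 := Nat.eq_one_of_dvd_coprimes hcop hda hdb
    rw [hd1, mul_one] at hd
    omega
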